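/- Let Π.φ be a QCNF, let l and r be literals over distinct variables such that the binary implication graph G_φ has a path from l to r, and let C ∈ φ be a clause with l ∈ C. If the clause C′ = (C∖{l})∨r contains no complementary pair of literals, then there is a QU-resolution proof of C′ from Π.φ. -/
import Mathlib


/-!
Framework for prenex QCNF: variables are natural numbers; a quantifier prefix is
given by `ex : Var → Bool` (`ex v = true` iff variable `v` is existential), and
the prefix order on variables (hence on literals) is `<` on ℕ.
-/

abbrev Var := ℕ

/-- A literal: a variable together with a polarity (`pos = true` for `x`, `false` for `x̄`). -/
structure Lit where
  var : Var
  pos : Bool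
deriving DecidableEq

/-- The complementary literal. -/
def Lit.neg (l : Lit) : Lit := ⟨l.var, !l.pos⟩

/-- Clauses (disjunctions) and terms (conjunctions) are finite sets of literals. -/
abbrev Clause := Finset Lit
abbrev Term := Finset Lit

/-- A set of literals contains no complementary pair. -/
def LitSetOk (C : Finset Lit) : Prop := ∀ l ∈ C, l.neg ∉ C

instance (C : Finset Lit) : Decidable (LitSetOk C) :=
  inferInstanceAs (Decidable (∀ l ∈ C, l.neg ∉ C))

/-- The resOf on pivot literal `p` (used both for clauses and for terms). -/
def resOf (p : Lit) (A B : Finset Lit) : Finset Lit := A.erase p ∪ B.erase p.neg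

/-- Resolution of `A` (containing `p`) with `B` (containing `p.neg`) is defined: the
union of the side literals contains no complementary pair and neither `p` nor `p.neg`. -/
def ResOk (p : Lit) (A B : Finset Lit) : Prop :=
  p ∈ A ∧ p.neg ∈ B ∧ p ∉ resOf p A B ∧ p.neg ∉ resOf p A B ∧
    LitSetOk (resOf p A B)

instance (p : Lit) (A B : Finset Lit) : Decidable (ResOk p A B) :=
  inferInstanceAs (Decidable (p ∈ A ∧ p.neg ∈ B ∧ p ∉ resOf p A B ∧
    p.neg ∉ resOf p A B ∧ LitSetOk (resOf p A B)))

/-- ∀-reduction: `C'` results from `C` by removing every universal literal `l` such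
that no existential literal `k ∈ C` satisfies `l < k`. -/
def IsForallReduct (ex : Var → Bool) (C C' : Clause) : Prop :=
  ∀ l : Lit, l ∈ C' ↔ l ∈ C ∧ (ex l.var = true ∨ ∃ k ∈ C, ex k.var = true ∧ l.var < k.var)

/-- QU-resolution proofs of a clause from the matrix `φ` under the prefix `ex`:
every clause is in `φ`, or a QU-resOf of two earlier clauses (the pivot may be
universal), or results from an earlier clause by ∀-reduction. -/
inductive QUProof (ex : Var → Bool) (φ : Finset Clause) : Clause → Prop
  | ax {C : Clause} : C ∈ φ → QUProof ex φ C
  | res {A B : Clause} {p : Lit} : QUProof ex φ A → QUProof ex φ B → ResOk p A B →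
      QUProof ex φ (resOf p A B)
  | red {C C' : Clause} : QUProof ex φ C → IsForallReduct ex C C' → QUProof ex φ C'

/-- ∃-reduction: `T'` results from `T` by removing every existential literal `l` such
that no universal literal `k ∈ T` satisfies `l < k`. -/
def IsExistsReduct (ex : Var → Bool) (T T' : Term) : Prop :=
  ∀ l : Lit, l ∈ T' ↔ l ∈ T ∧ (ex l.var = false ∨ ∃ k ∈ T, ex k.var = false ∧ l.var < k.var)

/-- Model generation rule: `T` is generated from the matrix `φ` if every clause of `φ`
contains a literal belonging to `T`. -/
def ModelGen (φ : Finset Clause) (T : Term) : Prop := ∀ C ∈ φ, ∃ l ∈ C, l ∈ T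

/-- `π` is a term-resolution proof of the term `T` from the QCNF with prefix `ex` and
matrix `φ`: a finite sequence of terms ending in `T`, each generated by model
generation or obtained from earlier terms by ∃-reduction or term-resolution. -/
def IsTermResProof (ex : Var → Bool) (φ : Finset Clause) (π : List Term) (T : Term) : Prop :=
  π ≠ [] ∧ π.getLast? = some T ∧
    ∀ i : Fin π.length, LitSetOk (π.get i) ∧
      (ModelGen φ (π.get i) ∨
        (∃ j : Fin π.length, j < i ∧ IsExistsReduct ex (π.get j) (π.get i)) ∨
        (∃ j k : Fin π.length, j < i ∧ k < i ∧ ∃ p : Lit,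
          ResOk p (π.get j) (π.get k) ∧ π.get i = resOf p (π.get j) (π.get k)))

/-- Value of a literal under a total assignment. -/
def evalLit (σ : Var → Bool) (l : Lit) : Bool := if l.pos then σ l.var else !σ l.var

/-- A strategy assigns to each (existential) variable a Boolean function of the
universal assignment — the semantic counterpart of a propositional formula. -/
abbrev Strategy := Var → (Var → Bool) → Bool

/-- The total assignment induced by a strategy `M` and a universal assignment `τ`. -/
def Strategy.assign (ex : Var → Bool) (M : Strategy) (τ : Var → Bool) : Var → Bool :=
  fun v => if ex v then M v τ else τ v

/-- The definition of each existential variable depends only on the universal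
variables preceding it in the prefix. -/
def WellFormed (ex : Var → Bool) (M : Strategy) : Prop :=
  ∀ e, ex e = true → ∀ τ τ' : Var → Bool,
    (∀ u, ex u = false → u < e → τ u = τ' u) → M e τ = M e τ'

/-- `M` is a model of the QCNF with prefix `ex` and matrix `φ`: it is a well-formed
strategy and `M(φ)` is a tautology. -/
def IsModel (ex : Var → Bool) (φ : Finset Clause) (M : Strategy) : Prop :=
  WellFormed ex M ∧
    ∀ τ : Var → Bool, ∀ C ∈ φ, ∃ l ∈ C, evalLit (Strategy.assign ex M τ) l = true

/-- A term `T` agrees with an assignment `τ` to the universal variables iff there is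
no (universal) literal `l` with `l̄ ∈ T` and `τ(l) = 1`. -/
def Agrees (ex : Var → Bool) (τ : Var → Bool) (T : Term) : Prop :=
  ¬∃ l : Lit, ex l.var = false ∧ l.neg ∈ T ∧ evalLit τ l = true

/-- Edge `a → b` of the binary implication graph of `φ`: the binary clause
`a.neg ∨ b` is in `φ` (a clause `l₁ ∨ l₂` yields the edges `l̄₁ → l₂`, `l̄₂ → l₁`). -/
def ImpEdge (φ : Finset Clause) (a b : Lit) : Prop :=
  a ≠ b ∧ a.neg ≠ b ∧ ({a.neg, b} : Clause) ∈ φ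

/-- The existential literal `l` of the clause `C` is blocked in the matrix `φ`. -/
def BlockedIn (ex : Var → Bool) (φ : Finset Clause) (C : Clause) (l : Lit) : Prop :=
  ex l.var = true ∧ l ∈ C ∧ ∀ D ∈ φ, l.neg ∈ D → ∃ k ∈ C, k.var < l.var ∧ k.neg ∈ D

/-- One step of blocked clause elimination: remove one blocked clause. -/
def BCEStep (ex : Var → Bool) (φ φ' : Finset Clause) : Prop :=
  ∃ C ∈ φ, (∃ l, BlockedIn ex φ C l) ∧ φ' = φ.erase C

/-- The side-condition for eliminating the existential variable `x` from the matrix `φ`. -/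
def VEside (x : Var) (φ : Finset Clause) : Prop :=
  ∀ C ∈ φ, (⟨x, true⟩ : Lit) ∈ C → (∃ k ∈ C, x < k.var) →
    ∀ D ∈ φ, (⟨x, false⟩ : Lit) ∈ D → ∃ z ∈ C, z.var < x ∧ z.neg ∈ D

/-- The set of all defined resolvents on `x` between the clauses of `φ` containing the
literal `x` and those containing `x̄`. -/
def VEresolvents (x : Var) (φ : Finset Clause) : Finset Clause :=
  ((φ ×ˢ φ).filter fun q => ResOk ⟨x, true⟩ q.1 q.2).image
    fun q => resOf ⟨x, true⟩ q.1 q.2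

/-- Variable elimination of `x`: replace all clauses mentioning `x` by all defined
resolvents on `x`. -/
def VEapply (x : Var) (φ : Finset Clause) : Finset Clause :=
  φ.filter (fun C => (⟨x, true⟩ : Lit) ∉ C ∧ (⟨x, false⟩ : Lit) ∉ C) ∪ VEresolvents x φ

/-- The variables of Φₙ (0-indexed): `uᵢ` is variable `2*i`, `eᵢ` is variable `2*i+1`,
so the prefix `∀u₀∃e₀…∀u_{n-1}∃e_{n-1}` is the natural order. -/
def uLit (i : ℕ) (b : Bool) : Lit := ⟨2 * i, b⟩
def eLit (i : ℕ) (b : Bool) : Lit := ⟨2 * i + 1, b⟩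

/-- The prefix of Φₙ: even variables universal, odd variables existential. -/
def phiEx : Var → Bool := fun v => v % 2 == 1

/-- The clause `ūᵢ ∨ eᵢ`. -/
def posClause (i : ℕ) : Clause := {uLit i false, eLit i true}
/-- The clause `uᵢ ∨ ēᵢ`. -/
def negClause (i : ℕ) : Clause := {uLit i true, eLit i false}

/-- The matrix of Φₙ: `⋀_{i<n} (ūᵢ ∨ eᵢ) ∧ (uᵢ ∨ ēᵢ)`. -/
def PhiMatrix (n : ℕ) : Finset Clause :=
  (Finset.range n).biUnion fun i => {posClause i, negClause i}

/-- The set `W` of witnesses for the literal `l` being blocked in the clause `C`. -/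
def witnesses (φ : Finset Clause) (C : Clause) (l : Lit) : Finset Lit :=
  C.filter fun k => k ≠ l ∧ k.var < l.var ∧ ∃ D ∈ φ, k.neg ∈ D ∧ l.neg ∈ D

/-- `φ` with all literals not less than `x` deleted from each clause. -/
def restrictBelow (x : Var) (φ : Finset Clause) : Finset Clause :=
  φ.image fun C => C.filter fun l => l.var < x

/-! ### Auxiliary lemmas for stmt18 -/

lemma Lit.neg_neg' (l : Lit) : l.neg.neg = l := by
  cases l; simp [Lit.neg]

lemma Lit.neg_ne' (l : Lit) : l.neg ≠ l := by
  cases l with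
  | mk v p => cases p <;> simp [Lit.neg]

lemma Lit.var_neg' (l : Lit) : l.neg.var = l.var := rfl

lemma Lit.eq_neg_of_var_eq {a b : Lit} (h : a.var = b.var) (hne : a ≠ b) : a = b.neg := by
  cases a with
  | mk va pa =>
    cases b with
    | mk vb pb =>
      simp at h; subst h
      cases pa <;> cases pb <;> simp_all [Lit.neg]

lemma Lit.ne_and_ne_neg_of_var_ne {a b : Lit} (h : a.var ≠ b.var) : a ≠ b ∧ a ≠ b.neg := by
  constructor
  · intro hh; exact h (hh ▸ rfl)
  · intro hh; apply h; rw [hh, Lit.var_neg']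

lemma litSetOk_pair {x y : Lit} (h : x.neg ≠ y) : LitSetOk ({x, y} : Finset Lit) := by
  intro l hl hc
  have hyx : y.neg ≠ x := by
    intro hh
    apply h
    rw [← hh, Lit.neg_neg']
  simp only [Finset.mem_insert, Finset.mem_singleton] at hl hc
  rcases hl with rfl | rfl <;> rcases hc with hc | hc
  · exact Lit.neg_ne' l hc
  · exact h hc
  · exact hyx hc
  · exact Lit.neg_ne' l hc

lemma pair_erase_left {a b : Lit} (h : a ≠ b) : ({a, b} : Finset Lit).erase a = {b} := by
  rw [show ({a, b} : Finset Lit) = insert a {b} from rfl,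
    Finset.erase_insert (by simpa using h)]

lemma pair_erase_right {a b : Lit} (h : a ≠ b) : ({a, b} : Finset Lit).erase b = {a} := by
  rw [Finset.pair_comm]
  exact pair_erase_left h.symm

lemma Lit.eq_neg_of_neg_eq {a b : Lit} (h : a.neg = b) : a = b.neg := by
  rw [← h, Lit.neg_neg']

/-- Length-indexed paths in the binary implication graph. -/
inductive PathN (φ : Finset Clause) : ℕ → Lit → Lit → Prop
  | refl (a : Lit) : PathN φ 0 a a
  | head {a b c : Lit} {n : ℕ} : ImpEdge φ a b → PathN φ n b c → PathN φ (n + 1) a c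

lemma PathN.tail' {φ : Finset Clause} {n : ℕ} {a b c : Lit}
    (h : PathN φ n a b) (he : ImpEdge φ b c) : PathN φ (n + 1) a c := by
  induction h with
  | refl => exact .head he (.refl _)
  | head h1 _ ih => exact .head h1 (ih he)

lemma pathN_of_rtg {φ : Finset Clause} {l r : Lit}
    (h : Relation.ReflTransGen (ImpEdge φ) l r) : ∃ n, PathN φ n l r := by
  induction h with
  | refl => exact ⟨0, .refl l⟩
  | tail _ he ih =>
    obtain ⟨n, p⟩ := ih
    exact ⟨n + 1, p.tail' he⟩

lemma PathN.inv {φ : Finset Clause} {n : ℕ} {a c : Lit}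
    (h : PathN φ n a c) (hne : a ≠ c) :
    ∃ m b, n = m + 1 ∧ ImpEdge φ a b ∧ PathN φ m b c := by
  cases h with
  | refl => exact absurd rfl hne
  | head he hp => exact ⟨_, _, rfl, he, hp⟩

/-- Key lemma, proved by strong induction on the path length.
Part 1: if `s ∈ D`, there is a path `s →* r`, and `r̄ ∉ D`, then from `D` we can
derive `(D ∖ {s}) ∪ {r}`.
Part 2: if there is a path `r̄ →* r` and `x.var ≠ r.var`, then from `{x, r̄}` we can
derive `{x, r}`. -/
theorem key_lemma (ex : Var → Bool) (φ : Finset Clause) (hok : ∀ C ∈ φ, LitSetOk C) :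
    ∀ n : ℕ,
      (∀ s r : Lit, ∀ D : Clause, PathN φ n s r → QUProof ex φ D → LitSetOk D →
        s ∈ D → r.neg ∉ D → QUProof ex φ (insert r (D.erase s))) ∧
      (∀ x r : Lit, PathN φ n r.neg r → x.var ≠ r.var →
        QUProof ex φ ({x, r.neg} : Clause) → QUProof ex φ ({x, r} : Clause)) := by
  intro n
  induction n using Nat.strong_induction_on with
  | _ n IH =>
  constructor
  · -- Part 1
    intro s r D hp hD hDok hsD hrD
    by_cases hsr : s = r
    · subst hsr
      rwa [Finset.insert_erase hsD]
    · have hsrn : s ≠ r.neg := fun h => hrD (h ▸ hsD)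
      have hsnr : s.neg ≠ r := fun h => hsrn (Lit.eq_neg_of_neg_eq h)
      obtain ⟨m, b, rfl, he, hp'⟩ := hp.inv hsr
      obtain ⟨hne1, hne2, hEmem⟩ := he
      have hm : m < m + 1 := Nat.lt_succ_self m
      -- derive F = {s.neg, r}
      have hF : QUProof ex φ ({s.neg, r} : Clause) := by
        by_cases hbr : b = r
        · subst hbr; exact .ax hEmem
        · by_cases hbrn : b = r.neg
          · subst hbrn
            have hvv : s.neg.var ≠ r.var := by
              rw [Lit.var_neg']
              intro hv
              exact hsrn (Lit.eq_neg_of_var_eq hv hsr)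
            exact (IH m hm).2 s.neg r hp' hvv (.ax hEmem)
          · -- generic case : use IH part 1 on the axiom E = {s.neg, b}
            have hbE : b ∈ ({s.neg, b} : Clause) := by simp
            have hrE : r.neg ∉ ({s.neg, b} : Clause) := by
              simp only [Finset.mem_insert, Finset.mem_singleton]
              push_neg
              refine ⟨?_, fun h => hbrn h.symm⟩
              intro h
              have := congrArg Lit.neg h
              rw [Lit.neg_neg', Lit.neg_neg'] at this
              exact hsr this.symm
            have h1 := (IH m hm).1 b r _ hp' (.ax hEmem) (hok _ hEmem) hbE hrE
            have : ({s.neg, b} : Clause).erase b = {s.neg} := pair_erase_right hne2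
            rw [this] at h1
            rw [show ({s.neg, r} : Clause) = insert r {s.neg} from Finset.pair_comm _ _]
            exact h1
      -- final resolution of D with F on pivot s
      have hokT : LitSetOk (insert r (D.erase s)) := by
        intro y hy hc
        simp only [Finset.mem_insert, Finset.mem_erase] at hy hc
        rcases hy with rfl | ⟨_, hyD⟩
        · rcases hc with hc | ⟨_, hc⟩
          · exact Lit.neg_ne' y (by rw [hc])
          · exact hrD hc
        · rcases hc with hc | ⟨_, hc⟩
          · exact hrD (Lit.eq_neg_of_neg_eq hc ▸ hyD)
          · exact hDok y hyD hc
      have hresOf : resOf s D ({s.neg, r} : Clause) = insert r (D.erase s) := by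
        unfold resOf
        rw [pair_erase_left hsnr]
        rw [Finset.union_comm, ← Finset.insert_eq]
      have hresOk : ResOk s D ({s.neg, r} : Clause) := by
        refine ⟨hsD, by simp, ?_, ?_, ?_⟩
        · rw [hresOf]
          simp only [Finset.mem_insert, Finset.mem_erase]
          push_neg
          exact ⟨hsr, fun h _ => h rfl⟩
        · rw [hresOf]
          simp only [Finset.mem_insert, Finset.mem_erase]
          push_neg
          exact ⟨hsnr, fun _ h => hDok s hsD h⟩
        · rw [hresOf]; exact hokT
      have := QUProof.res hD hF hresOk
      rwa [hresOf] at this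
  · -- Part 2
    intro x r hp hxr hQ
    have hxrne := Lit.ne_and_ne_neg_of_var_ne hxr
    have hnxr : r.neg ≠ x := fun h => hxrne.2 h.symm
    obtain ⟨m, b, rfl, he, hp'⟩ := hp.inv (Lit.neg_ne' r)
    obtain ⟨hne1, hne2, hEmem⟩ := he
    rw [Lit.neg_neg'] at hne2 hEmem
    have hm : m < m + 1 := Nat.lt_succ_self m
    by_cases hbx : b = x
    · rw [Finset.pair_comm]
      exact .ax (hbx ▸ hEmem)
    · by_cases hbxn : b = x.neg
      · -- b = x̄ : unfold one more step of the path
        subst hbxn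
        have hxnr : x.neg ≠ r := by
          intro h
          apply hxr
          rw [← h, Lit.var_neg']
        obtain ⟨j, c, rfl, he2, hp''⟩ := hp'.inv hxnr
        obtain ⟨hne3, hne4, hGmem⟩ := he2
        rw [Lit.neg_neg'] at hne4 hGmem
        have hj : j < j + 1 + 1 := by omega
        by_cases hcr : c = r
        · subst hcr; exact .ax hGmem
        · by_cases hcrn : c = r.neg
          · subst hcrn
            exact (IH j hj).2 x r hp'' hxr (.ax hGmem)
          · have hcG : c ∈ ({x, c} : Clause) := by simp
            have hrG : r.neg ∉ ({x, c} : Clause) := by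
              simp only [Finset.mem_insert, Finset.mem_singleton]
              push_neg
              exact ⟨hnxr, fun h => hcrn h.symm⟩
            have h1 := (IH j hj).1 c r _ hp'' (.ax hGmem) (hok _ hGmem) hcG hrG
            rw [pair_erase_right hne4] at h1
            rwa [show ({x, r} : Clause) = insert r {x} from Finset.pair_comm _ _]
      · -- generic case: resolve {x, r̄} with {r, b} on pivot r̄, getting {x, b}
        have hbr : b ≠ r := fun h => hne2 h.symm
        have hbrn : b ≠ r.neg := fun h => hne1 h.symm
        have hresOf : resOf r.neg ({x, r.neg} : Clause) ({r, b} : Clause)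
            = ({x, b} : Clause) := by
          unfold resOf
          rw [pair_erase_right (Ne.symm hnxr), Lit.neg_neg',
            pair_erase_left (Ne.symm hbr)]
          rfl
        have hokxb : LitSetOk ({x, b} : Clause) :=
          litSetOk_pair (fun h => hbxn h.symm)
        have hresOk : ResOk r.neg ({x, r.neg} : Clause) ({r, b} : Clause) := by
          refine ⟨by simp, by rw [Lit.neg_neg']; simp, ?_, ?_, ?_⟩
          · rw [hresOf]
            simp only [Finset.mem_insert, Finset.mem_singleton]
            push_neg
            exact ⟨hnxr, Ne.symm hbrn⟩
          · rw [hresOf, Lit.neg_neg']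
            simp only [Finset.mem_insert, Finset.mem_singleton]
            push_neg
            exact ⟨hxrne.1.symm, Ne.symm hbr⟩
          · rw [hresOf]; exact hokxb
        have hxb : QUProof ex φ ({x, b} : Clause) := by
          have := QUProof.res hQ (.ax hEmem) hresOk
          rwa [hresOf] at this
        have hbxb : b ∈ ({x, b} : Clause) := by simp
        have hrxb : r.neg ∉ ({x, b} : Clause) := by
          simp only [Finset.mem_insert, Finset.mem_singleton]
          push_neg
          exact ⟨hnxr, Ne.symm hbrn⟩
        have h1 := (IH m hm).1 b r _ hp' hxb hokxb hbxb hrxb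
        rw [pair_erase_right (Ne.symm hbx)] at h1
        rwa [show ({x, r} : Clause) = insert r {x} from Finset.pair_comm _ _]

theorem stmt18 (ex : Var → Bool) (φ : Finset Clause) (hok : ∀ C ∈ φ, LitSetOk C)
    (l r : Lit) (hvar : l.var ≠ r.var)
    (hpath : Relation.ReflTransGen (ImpEdge φ) l r)
    (C : Clause) (hC : C ∈ φ) (hl : l ∈ C)
    (hok' : LitSetOk (insert r (C.erase l))) :
    QUProof ex φ (insert r (C.erase l)) := by
  obtain ⟨n, hp⟩ := pathN_of_rtg hpath
  have hrC : r.neg ∉ C := by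
    intro h
    have hrl : r.neg ≠ l := by
      intro hh
      exact hvar (by rw [← hh, Lit.var_neg'])
    have h' : r.neg ∈ insert r (C.erase l) :=
      Finset.mem_insert_of_mem (Finset.mem_erase.mpr ⟨hrl, h⟩)
    exact hok' r (Finset.mem_insert_self _ _) h'
  exact (key_lemma ex φ hok n).1 l r C hp (.ax hC) (hok C hC) hl hrC
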